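/- Let k ≥ 2 and let {t_n} be the 2k-nacci sequence. Then for all m ≥ 1, t_{m(2k+1)} ≡ 1 + (−1)^{m+1}·4m(k−1) + (−1)^{m+1} (mod 2^{2ν_2(k−1)+5}), where ν_2 denotes the 2-adic valuation. -/

import Mathlib

/-!
For `K = 2k` the recurrence implies `t (n + 1) = 2 t n - t (n - K)` for `n ≥ K`, a recurrence
with characteristic polynomial `1 - 2X + X^(K+1)`. In terms of its impulse response `G` one has
the exact formula `t n = 1 + G (n - K - 1) + (K - 2) G (n - K)` for `n ≥ 1`. Modulo `2^(K+1)`,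
the recurrence for `G` gives `2^r ∣ G ((K+1) q + r)` for `r ≤ K`, hence `G ((K+1) q) ≡ (-1)^q`
and `G ((K+1) q + 1) ≡ 2 (-1)^q (q+1)`. Evaluating the formula at `n = m (K+1)` proves the
congruence modulo `2^(2k+1)`, a multiple of the required modulus since `ν₂(k-1) < k-1`.
-/

open Finset

/-- The coefficients of `1 / (1 - 2X + X^(K+1))`, extended by zero to negative indices. -/
def impulseResponse (K : ℕ) (n : ℤ) : ℤ :=
  if n < 0 then 0 else if n = 0 then 1
  else 2 * impulseResponse K (n - 1) - impulseResponse K (n - K - 1)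
termination_by n.toNat
decreasing_by all_goals omega

namespace impulseResponse

variable {K : ℕ}

theorem of_neg {n : ℤ} (hn : n < 0) : impulseResponse K n = 0 := by
  rw [impulseResponse, if_pos hn]

@[simp] theorem zero : impulseResponse K 0 = 1 := by
  rw [impulseResponse]; simp

theorem of_ne_zero {n : ℤ} (hn : n ≠ 0) :
    impulseResponse K n = 2 * impulseResponse K (n - 1) - impulseResponse K (n - K - 1) := by
  rcases hn.lt_or_gt with hn | hn
  · rw [of_neg hn, of_neg (by omega), of_neg (by omega)]; ring
  · rw [impulseResponse, if_neg (by omega), if_neg (by omega)]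

theorem natCast_of_le {n : ℕ} (hn : n ≤ K) : impulseResponse K n = 2 ^ n := by
  induction n with
  | zero => simp
  | succ n ih =>
    rw [of_ne_zero (by omega), Nat.cast_add_one, add_sub_cancel_right, ih (by omega),
      of_neg (by omega), pow_succ]
    ring

theorem one (hK : 1 ≤ K) : impulseResponse K 1 = 2 := by
  exact_mod_cast natCast_of_le hK

theorem two_pow_dvd (q : ℕ) {r : ℕ} (hr : r ≤ K) :
    2 ^ r ∣ impulseResponse K ((K + 1) * q + r) := by
  induction q generalizing r with
  | zero => simp [natCast_of_le hr]
  | succ q ihq =>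
    induction r with
    | zero => simp
    | succ r ihr =>
      have hprev : ((K + 1) * (q + 1 : ℕ) + (r + 1 : ℕ) - 1 : ℤ) =
          (K + 1) * (q + 1 : ℕ) + r := by push_cast; ring
      have hback : ((K + 1) * (q + 1 : ℕ) + (r + 1 : ℕ) - K - 1 : ℤ) =
          (K + 1) * q + (r + 1 : ℕ) := by push_cast; ring
      rw [of_ne_zero (by positivity), hback, hprev]
      refine dvd_sub ?_ (ihq hr)
      rw [pow_succ']
      exact mul_dvd_mul_left 2 (ihr (by omega))

theorem mul_modEq (q : ℕ) :
    impulseResponse K ((K + 1) * q) ≡ (-1) ^ q [ZMOD 2 ^ (K + 1)] := by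
  induction q with
  | zero => simp
  | succ q ih =>
    have hprev : ((K + 1) * (q + 1 : ℕ) - 1 : ℤ) = (K + 1) * q + K := by push_cast; ring
    have hback : ((K + 1) * (q + 1 : ℕ) - K - 1 : ℤ) = (K + 1) * q := by push_cast; ring
    have hvanish : 2 * impulseResponse K ((K + 1) * q + K) ≡ 0 [ZMOD 2 ^ (K + 1)] := by
      rw [Int.modEq_zero_iff_dvd, pow_succ']
      exact mul_dvd_mul_left 2 (two_pow_dvd q le_rfl)
    rw [of_ne_zero (by positivity), hback, hprev]
    calc _ ≡ 0 - (-1) ^ q [ZMOD 2 ^ (K + 1)] := hvanish.sub ih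
      _ = (-1) ^ (q + 1) := by ring

theorem mul_add_one_modEq (hK : 1 ≤ K) (q : ℕ) :
    impulseResponse K ((K + 1) * q + 1) ≡ 2 * (-1) ^ q * (q + 1) [ZMOD 2 ^ (K + 1)] := by
  induction q with
  | zero => simp [one hK]
  | succ q ih =>
    have hback : ((K + 1) * (q + 1 : ℕ) + 1 - K - 1 : ℤ) = (K + 1) * q + 1 := by push_cast; ring
    rw [of_ne_zero (by positivity), hback, add_sub_cancel_right]
    calc _ ≡ 2 * (-1) ^ (q + 1) - 2 * (-1) ^ q * (q + 1) [ZMOD 2 ^ (K + 1)] :=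
          ((mul_modEq (q + 1)).mul_left 2).sub ih
      _ = 2 * (-1) ^ (q + 1) * ((q + 1 : ℕ) + 1) := by push_cast; ring

end impulseResponse

theorem sum_Icc_one_eq_sum_range {M : Type*} [AddCommMonoid M] (f : ℕ → M) (K : ℕ) :
    ∑ i ∈ Icc 1 K, f i = ∑ i ∈ range K, f (i + 1) := by
  induction K with
  | zero => simp
  | succ K ih => rw [sum_Icc_succ_top (by omega), ih, sum_range_succ]

theorem knacci_succ_add {K : ℕ} {t : ℕ → ℕ}
    (hrec : ∀ n, K ≤ n → t n = ∑ i ∈ Icc 1 K, t (n - i)) {n : ℕ} (hn : K ≤ n) :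
    t (n + 1) + t (n - K) = 2 * t n := by
  have hnext := hrec (n + 1) (by omega)
  have hcur := hrec n hn
  rw [sum_Icc_one_eq_sum_range] at hnext hcur
  simp only [Nat.add_sub_add_right] at hnext
  rcases K with _ | K
  · simp_all
  · rw [sum_range_succ', Nat.sub_zero] at hnext
    rw [sum_range_succ] at hcur
    omega

theorem knacci_self {K : ℕ} {t : ℕ → ℕ} (h0 : t 0 = 0)
    (h1 : ∀ n, 1 ≤ n → n ≤ K - 1 → t n = 1)
    (hrec : ∀ n, K ≤ n → t n = ∑ i ∈ Icc 1 K, t (n - i)) : t K = K - 1 := by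
  rw [hrec K le_rfl, sum_Icc_one_eq_sum_range]
  rcases K with _ | K
  · simp
  · rw [sum_range_succ, Nat.sub_self, h0, add_zero, Nat.add_sub_cancel,
      sum_congr rfl fun i hi => h1 _ (by have := mem_range.1 hi; omega) (by omega)]
    simp

theorem knacci_eq_impulseResponse {K : ℕ} (hK : 1 ≤ K) {t : ℕ → ℕ} (h0 : t 0 = 0)
    (h1 : ∀ n, 1 ≤ n → n ≤ K - 1 → t n = 1)
    (hrec : ∀ n, K ≤ n → t n = ∑ i ∈ Icc 1 K, t (n - i)) {n : ℕ} (hn : 1 ≤ n) :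
    (t n : ℤ) = 1 + impulseResponse K (n - K - 1) + (K - 2) * impulseResponse K (n - K) := by
  induction n using Nat.strong_induction_on with
  | _ n ih =>
  rcases Nat.lt_or_ge n K with hlt | hge
  · rw [h1 n hn (by omega), impulseResponse.of_neg (by omega), impulseResponse.of_neg (by omega)]
    push_cast; ring
  obtain ⟨d, rfl⟩ := Nat.exists_eq_add_of_le hge
  rcases d with _ | _ | j
  · rw [Nat.add_zero, knacci_self h0 h1 hrec, Nat.cast_sub hK, sub_self, zero_sub,
      impulseResponse.of_neg (by omega), impulseResponse.zero]
    push_cast; ring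
  · have hstep := knacci_succ_add hrec (le_refl K)
    rw [Nat.sub_self, h0, knacci_self h0 h1 hrec] at hstep
    have a1 : ((K + (0 + 1) : ℕ) : ℤ) - K - 1 = 0 := by push_cast; ring
    have a2 : ((K + (0 + 1) : ℕ) : ℤ) - K = 1 := by push_cast; ring
    rw [a1, a2, impulseResponse.zero, impulseResponse.one hK,
      show t (K + (0 + 1)) = 2 * (K - 1) by omega]
    push_cast [Nat.cast_sub hK]; ring
  · have hstep := knacci_succ_add hrec (n := K + (j + 1)) (by omega)
    rw [Nat.add_sub_cancel_left] at hstep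
    have ihK := ih (K + (j + 1)) (by omega) (by omega)
    have ihj := ih (j + 1) (by omega) (by omega)
    have a1 : ((K + (j + 1 + 1) : ℕ) : ℤ) - K - 1 = (j + 1 : ℕ) := by push_cast; ring
    have a2 : ((K + (j + 1 + 1) : ℕ) : ℤ) - K = (j + 1 : ℕ) + 1 := by push_cast; ring
    have a3 : ((K + (j + 1) : ℕ) : ℤ) - K - 1 = (j + 1 : ℕ) - 1 := by push_cast; ring
    have a4 : ((K + (j + 1) : ℕ) : ℤ) - K = (j + 1 : ℕ) := by push_cast; ring
    rw [a3, a4] at ihK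
    rw [a1, a2]
    have g0 := impulseResponse.of_ne_zero (K := K) (n := (j + 1 : ℕ)) (by omega)
    have g1 := impulseResponse.of_ne_zero (K := K) (n := (j + 1 : ℕ) + 1) (by omega)
    rw [add_sub_cancel_right, add_sub_right_comm, add_sub_cancel_right] at g1
    have hstepZ : (t (K + (j + 1 + 1)) : ℤ) + t (j + 1) = 2 * t (K + (j + 1)) := by
      exact_mod_cast hstep
    linear_combination hstepZ + 2 * ihK - ihj - g0 - (K - 2 : ℤ) * g1

theorem twoknacci_super_formula (k : ℕ) (hk : 2 ≤ k) (t : ℕ → ℕ)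
    (h0 : t 0 = 0)
    (h1 : ∀ n, 1 ≤ n → n ≤ 2 * k - 1 → t n = 1)
    (hrec : ∀ n, 2 * k ≤ n → t n = ∑ i ∈ Finset.Icc 1 (2 * k), t (n - i)) :
    ∀ m : ℕ, 1 ≤ m →
      (t (m * (2 * k + 1)) : ℤ) ≡
        1 + (-1) ^ (m + 1) * 4 * m * (k - 1) + (-1) ^ (m + 1)
          [ZMOD 2 ^ (2 * padicValNat 2 (k - 1) + 5)] := by
  intro m hm
  obtain ⟨q, rfl⟩ : ∃ q, m = q + 1 := ⟨m - 1, by omega⟩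
  have hformula := knacci_eq_impulseResponse (K := 2 * k) (by omega) h0 h1 hrec
    (n := (q + 1) * (2 * k + 1)) (Nat.mul_pos (by omega) (by omega))
  have hblock : (((q + 1) * (2 * k + 1) : ℕ) : ℤ) - (2 * k : ℕ) - 1 =
      ((2 * k : ℕ) + 1) * q := by push_cast; ring
  have hblock' : (((q + 1) * (2 * k + 1) : ℕ) : ℤ) - (2 * k : ℕ) =
      ((2 * k : ℕ) + 1) * q + 1 := by push_cast; ring
  rw [hblock, hblock'] at hformula
  have hmod : (t ((q + 1) * (2 * k + 1)) : ℤ) ≡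
      1 + (-1) ^ (q + 1 + 1) * 4 * (q + 1 : ℕ) * (k - 1) + (-1) ^ (q + 1 + 1)
        [ZMOD 2 ^ (2 * k + 1)] := by
    rw [hformula]
    calc _ ≡ 1 + (-1) ^ q + ((2 * k : ℕ) - 2) * (2 * (-1) ^ q * (q + 1))
          [ZMOD 2 ^ (2 * k + 1)] :=
          ((impulseResponse.mul_modEq q).add_left 1).add
            ((impulseResponse.mul_add_one_modEq (by omega) q).mul_left _)
      _ = _ := by push_cast; ring
  have hval := Nat.padicValNat_lt_self (p := 2) (n := k - 1) (by omega)
  exact hmod.of_dvd (pow_dvd_pow 2 (by omega))
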